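/- Let S_n be the star graph on n ≥ 3 vertices. The set of values γ_{2,2}(Ḡ) over all orientations Ḡ of S_n is exactly {n−1, n}. That is, every orientation has directed (2,2) broadcast domination number n−1 or n, and both values are achieved. -/

import Mathlib

open Finset

/-- `DReach A n u v`: there is a directed walk of length `n` from `u` to `v`
in the digraph with arc relation `A`. -/
def DReach {V : Type*} (A : V → V → Prop) : ℕ → V → V → Prop
  | 0, u, v => u = v
  | n + 1, u, v => ∃ w, A u w ∧ DReach A n w v

/-- The signal a broadcasting vertex `u` of strength `t` sends to `w`:
`t - d(u,w)` where `d` is the directed distance (0 if `d(u,w) ≥ t` or `w` unreachable). -/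
noncomputable def dsignal {V : Type*} (A : V → V → Prop) (t : ℕ) (u w : V) : ℕ :=
  sSup {m : ℕ | ∃ n : ℕ, DReach A n u w ∧ m = t - n}

/-- The directed reception at `w` from the broadcast set `S` of strength `t`. -/
noncomputable def dreception {V : Type*} [Fintype V] (A : V → V → Prop) (t : ℕ)
    (S : Finset V) (w : V) : ℕ :=
  ∑ v ∈ S, dsignal A t v w

/-- `S` is a directed `(t,r)` broadcast dominating set of the digraph `A`. -/
def IsDomSet {V : Type*} [Fintype V] (A : V → V → Prop) (t r : ℕ) (S : Finset V) : Prop :=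
  ∀ w : V, r ≤ dreception A t S w

/-- The directed `(t,r)` broadcast domination number of the digraph `A`. -/
noncomputable def gamma {V : Type*} [Fintype V] (A : V → V → Prop) (t r : ℕ) : ℕ :=
  sInf {k : ℕ | ∃ S : Finset V, IsDomSet A t r S ∧ S.card = k}

/-- `A` is an orientation of the simple graph `G`: every arc is along an edge of `G`,
and each edge of `G` is directed in exactly one of the two directions. -/
def IsOrientation {V : Type*} (G : SimpleGraph V) (A : V → V → Prop) : Prop :=
  (∀ u v, A u v → G.Adj u v) ∧ ∀ u v, G.Adj u v → (A u v ↔ ¬ A v u)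

/-- `A₁` is obtained from `A₀` by reversing (flipping) a single arc. -/
def OneFlip {V : Type*} (A₀ A₁ : V → V → Prop) : Prop :=
  ∃ a b, A₀ a b ∧ A₁ b a ∧
    ∀ u v, ¬((u = a ∧ v = b) ∨ (u = b ∧ v = a)) → (A₀ u v ↔ A₁ u v)

/-- The star graph on `n` vertices: vertex with value `0` is the center. -/
def starGraph (n : ℕ) : SimpleGraph (Fin n) where
  Adj u v := u ≠ v ∧ (u.val = 0 ∨ v.val = 0)
  symm := by constructor; intro u v h; exact ⟨h.1.symm, h.2.symm⟩
  loopless := by constructor; intro u h; exact h.1 rfl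

/-!
Every leaf of the star hears at most the signal `1` from the center and nothing from the other
leaves, so a directed `(2,2)` broadcast dominating set contains all `n - 1` leaves; the whole
vertex set always dominates. Hence `n - 1 ≤ γ₂,₂ ≤ n`. Orienting every edge towards the center,
the leaves alone give the center reception `n - 1 ≥ 2`; orienting every edge away from it, the
center receives nothing and must broadcast itself.
-/

section Broadcast

variable {V : Type*} {A : V → V → Prop} {t : ℕ} {u w : V}

lemma bddAbove_dsignal_set (A : V → V → Prop) (t : ℕ) (u w : V) :
    BddAbove {m : ℕ | ∃ n : ℕ, DReach A n u w ∧ m = t - n} :=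
  ⟨t, fun _ ⟨n, _, hm⟩ => hm ▸ Nat.sub_le t n⟩

lemma dsignal_self (A : V → V → Prop) (t : ℕ) (u : V) : dsignal A t u u = t :=
  le_antisymm (csSup_le' fun _ ⟨n, _, hm⟩ => hm ▸ Nat.sub_le t n)
    (le_csSup (bddAbove_dsignal_set A t u u) ⟨0, rfl, rfl⟩)

lemma dsignal_le_pred (huw : u ≠ w) : dsignal A t u w ≤ t - 1 := by
  refine csSup_le' ?_
  rintro m ⟨_ | k, hreach, rfl⟩
  · exact absurd hreach huw
  · omega

lemma pred_le_dsignal (h : A u w) : t - 1 ≤ dsignal A t u w :=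
  le_csSup (bddAbove_dsignal_set A t u w) ⟨1, ⟨w, h, rfl⟩, rfl⟩

lemma dsignal_two_eq_zero (huw : u ≠ w) (h : ¬ A u w) : dsignal A 2 u w = 0 := by
  refine Nat.le_zero.mp (csSup_le' ?_)
  rintro m ⟨_ | _ | k, hreach, rfl⟩
  · exact absurd hreach huw
  · obtain ⟨x, hx, rfl⟩ := hreach
    exact absurd hx h
  · omega

variable [Fintype V] {r : ℕ} {S : Finset V}

lemma le_dreception_of_mem (hw : w ∈ S) : t ≤ dreception A t S w :=
  (dsignal_self A t w).ge.trans <|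
    single_le_sum (f := fun v => dsignal A t v w) (fun _ _ => Nat.zero_le _) hw

lemma isDomSet_univ (hrt : r ≤ t) : IsDomSet A t r univ :=
  fun _ => hrt.trans (le_dreception_of_mem (mem_univ _))

lemma mem_of_isDomSet_of_forall_not_adj (hS : IsDomSet A 2 r S) (hr : 0 < r)
    (hw : ∀ v, ¬ A v w) : w ∈ S := by
  by_contra hwS
  have : dreception A 2 S w = 0 :=
    sum_eq_zero fun v hv => dsignal_two_eq_zero (fun h => hwS (h ▸ hv)) (hw v)
  have := hS w
  omega

lemma gamma_le_card (hS : IsDomSet A t r S) : gamma A t r ≤ S.card :=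
  Nat.sInf_le ⟨S, hS, rfl⟩

lemma gamma_le_card_univ (hrt : r ≤ t) : gamma A t r ≤ Fintype.card V :=
  gamma_le_card (isDomSet_univ hrt)

lemma le_gamma (hrt : r ≤ t) {k : ℕ} (h : ∀ S, IsDomSet A t r S → k ≤ S.card) :
    k ≤ gamma A t r :=
  le_csInf ⟨_, univ, isDomSet_univ hrt, rfl⟩ fun _ ⟨S, hS, hk⟩ => hk ▸ h S hS

end Broadcast

section Star

variable {n : ℕ} [NeZero n] {A : Fin n → Fin n → Prop}

lemma starGraph_adj_iff {u v : Fin n} : (starGraph n).Adj u v ↔ u ≠ v ∧ (u = 0 ∨ v = 0) := by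
  simp only [starGraph, Fin.val_eq_zero_iff]

lemma mem_of_isDomSet_star (hA : IsOrientation (starGraph n) A) {S : Finset (Fin n)}
    (hS : IsDomSet A 2 2 S) {w : Fin n} (hw : w ≠ 0) : w ∈ S := by
  by_contra hwS
  have hleaf : ∀ v ∈ univ.erase w, v ≠ 0 → dsignal A 2 v w = 0 := fun v hv hv0 =>
    dsignal_two_eq_zero (ne_of_mem_erase hv) fun hvw => by
      rcases (starGraph_adj_iff.mp (hA.1 v w hvw)).2 with h | h
      exacts [hv0 h, hw h]
  have : dreception A 2 S w ≤ 1 :=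
    calc dreception A 2 S w ≤ ∑ v ∈ univ.erase w, dsignal A 2 v w :=
          sum_le_sum_of_subset fun v hv => mem_erase.mpr ⟨fun h => hwS (h ▸ hv), mem_univ v⟩
      _ = dsignal A 2 0 w := sum_eq_single_of_mem 0 (mem_erase.mpr ⟨hw.symm, mem_univ _⟩) hleaf
      _ ≤ 1 := dsignal_le_pred hw.symm
  have := hS w
  omega

lemma pred_le_card_of_isDomSet_star (hA : IsOrientation (starGraph n) A) {S : Finset (Fin n)}
    (hS : IsDomSet A 2 2 S) : n - 1 ≤ S.card := by
  have hsub : univ.erase 0 ⊆ S := fun w hw => mem_of_isDomSet_star hA hS (ne_of_mem_erase hw)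
  simpa [card_erase_of_mem] using card_le_card hsub

lemma gamma_star_eq_pred_or_eq (hA : IsOrientation (starGraph n) A) :
    gamma A 2 2 = n - 1 ∨ gamma A 2 2 = n := by
  have hlow := le_gamma le_rfl fun S hS => pred_le_card_of_isDomSet_star hA hS
  have hup : gamma A 2 2 ≤ n := by simpa using gamma_le_card_univ (A := A) le_rfl
  omega

def inStar (n : ℕ) [NeZero n] (u v : Fin n) : Prop := v = 0 ∧ u ≠ 0

def outStar (n : ℕ) [NeZero n] (u v : Fin n) : Prop := u = 0 ∧ v ≠ 0

lemma isOrientation_inStar : IsOrientation (starGraph n) (inStar n) := by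
  refine ⟨fun u v h => ?_, fun u v h => ?_⟩ <;>
    simp only [starGraph_adj_iff, inStar] at * <;> grind

lemma isOrientation_outStar : IsOrientation (starGraph n) (outStar n) := by
  refine ⟨fun u v h => ?_, fun u v h => ?_⟩ <;>
    simp only [starGraph_adj_iff, outStar] at * <;> grind

lemma gamma_inStar (hn : 3 ≤ n) : gamma (inStar n) 2 2 = n - 1 := by
  have hdom : IsDomSet (inStar n) 2 2 (univ.erase 0) := by
    intro w
    rcases eq_or_ne w 0 with rfl | hw
    · let v₁ : Fin n := ⟨1, by omega⟩
      let v₂ : Fin n := ⟨2, by omega⟩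
      have h₁ : v₁ ≠ 0 := by simp [v₁, Fin.ext_iff]
      have h₂ : v₂ ≠ 0 := by simp [v₂, Fin.ext_iff]
      have h₁₂ : v₁ ≠ v₂ := by simp [v₁, v₂, Fin.ext_iff]
      calc 2 ≤ dsignal (inStar n) 2 v₁ 0 + dsignal (inStar n) 2 v₂ 0 :=
            add_le_add (pred_le_dsignal (t := 2) ⟨rfl, h₁⟩) (pred_le_dsignal (t := 2) ⟨rfl, h₂⟩)
        _ = ∑ v ∈ {v₁, v₂}, dsignal (inStar n) 2 v 0 :=
            (sum_pair (f := fun v => dsignal (inStar n) 2 v 0) h₁₂).symm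
        _ ≤ dreception (inStar n) 2 (univ.erase 0) 0 :=
            sum_le_sum_of_subset (by simp [insert_subset_iff, h₁, h₂])
    · exact le_dreception_of_mem (mem_erase.mpr ⟨hw, mem_univ w⟩)
  refine le_antisymm ?_ (le_gamma le_rfl fun S hS =>
    pred_le_card_of_isDomSet_star isOrientation_inStar hS)
  simpa [card_erase_of_mem] using gamma_le_card hdom

lemma gamma_outStar : gamma (outStar n) 2 2 = n := by
  refine le_antisymm (by simpa using gamma_le_card_univ (A := outStar n) le_rfl)
    (le_gamma le_rfl fun S hS => ?_)
  have hS_univ : univ ⊆ S := fun w _ => by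
    rcases eq_or_ne w 0 with rfl | hw
    · exact mem_of_isDomSet_of_forall_not_adj hS two_pos fun v h => h.2 rfl
    · exact mem_of_isDomSet_star isOrientation_outStar hS hw
  simpa using card_le_card hS_univ

end Star

theorem stmt6 (n : ℕ) (hn : 3 ≤ n) :
    {k : ℕ | ∃ A : Fin n → Fin n → Prop, IsOrientation (starGraph n) A ∧ gamma A 2 2 = k}
      = {n - 1, n} := by
  have : NeZero n := ⟨by omega⟩
  ext k
  constructor
  · rintro ⟨A, hA, rfl⟩
    exact gamma_star_eq_pred_or_eq hA
  · rintro (rfl | rfl)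
    exacts [⟨inStar _, isOrientation_inStar, gamma_inStar hn⟩,
      ⟨outStar _, isOrientation_outStar, gamma_outStar⟩]
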